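/- One step of the Strang splitting scheme preserves the discrete finite mass. Precisely, let τ > 0 and let (ψ_n)_{x_n∈X_N} be complex grid values. Define: (i) the half potential step φ_n = e^{(iτ/4)(1−|ψ_n|²)} ψ_n; (ii) the Fourier coefficients φ̂_k = h₁h₂h₃ ∑_{x_n∈X_N} φ_n conj(𝓔_k(x_n)); (iii) the kinetic step in Fourier space χ̂_k = e^{(iτ/2)(Λ_{k,1}²+Λ_{k,2}²+Λ_{k,3}²)} φ̂_k with Λ_{k,d} = 2πi(k_d−1−N_d/2)/(b_d−a_d), and its grid evaluation χ_n = ∑_{k∈I_N} χ̂_k 𝓔_k(x_n); (iv) the final half potential step ψ'_n = e^{(iτ/4)(1−|χ_n|²)} χ_n. Then h₁h₂h₃ ∑_{x_n∈X_N} |ψ'_n|² = h₁h₂h₃ ∑_{x_n∈X_N} |ψ_n|². -/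

import Mathlib

open scoped Real
open Complex MeasureTheory Finset

/-- The 3d Fourier basis function `𝓔ₖ(x) = ∏_d e^{2πi(k_d−1−N_d/2)(x_d−a_d)/(b_d−a_d)}/√(b_d−a_d)`. -/
noncomputable def basisE (N : Fin 3 → ℕ) (a b : Fin 3 → ℝ) (k : Fin 3 → ℕ)
    (x : Fin 3 → ℝ) : ℂ :=
  ∏ d : Fin 3,
    Complex.exp (2 * (Real.pi : ℂ) * Complex.I * ((k d : ℂ) - 1 - (N d : ℂ) / 2) *
        ((x d - a d : ℝ) : ℂ) / ((b d - a d : ℝ) : ℂ)) / ((Real.sqrt (b d - a d) : ℝ) : ℂ)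

/-- The point `x_n = (a_d + (n_d − 1) h_d)_d` of the regular grid `X_N`,
where `h_d = (b_d − a_d)/N_d`. -/
noncomputable def gridPt (N : Fin 3 → ℕ) (a b : Fin 3 → ℝ) (n : Fin 3 → ℕ) : Fin 3 → ℝ :=
  fun d => a d + ((n d : ℝ) - 1) * ((b d - a d) / (N d : ℝ))

/-- The symbol `Λ_{k,d} = 2πi(k_d − 1 − N_d/2)/(b_d − a_d)` of `∂_{x_d}` on `𝓔ₖ`. -/
noncomputable def lam (N : Fin 3 → ℕ) (a b : Fin 3 → ℝ) (k : Fin 3 → ℕ) (d : Fin 3) : ℂ :=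
  2 * (Real.pi : ℂ) * Complex.I * ((k d : ℂ) - 1 - (N d : ℂ) / 2) / ((b d - a d : ℝ) : ℂ)

/-!
Each half potential step multiplies every grid value by a unimodular factor, and the kinetic
step multiplies every Fourier coefficient by the unimodular factor `e^{(iτ/2)∑_d Λ_{k,d}²}`
(the `Λ_{k,d}` are purely imaginary). So only the passage between grid values and Fourier
coefficients needs an argument: a discrete Parseval identity. The grid values of the `𝓔ₖ`
are orthogonal both in `k` and in `n`, with squared norm `(h₁h₂h₃)⁻¹`, because they are a tensor
product of shifted one-dimensional discrete Fourier systems, whose orthogonality comes down to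
the vanishing of sums of nontrivial `N_d`-th roots of unity.
-/

open scoped ComplexConjugate

def IsOrthogonalOn {ι κ : Type*} [DecidableEq κ] (S : Finset ι) (T : Finset κ) (e : κ → ι → ℂ)
    (c : ℝ) : Prop :=
  ∀ k ∈ T, ∀ j ∈ T, ∑ n ∈ S, conj (e k n) * e j n = if k = j then (c : ℂ) else 0

namespace IsOrthogonalOn

variable {ι κ : Type*} [DecidableEq κ] {S : Finset ι} {T : Finset κ} {e : κ → ι → ℂ} {c : ℝ}

theorem sum_norm_sq_sum_mul (he : IsOrthogonalOn S T e c) (f : κ → ℂ) :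
    ∑ n ∈ S, ‖∑ k ∈ T, f k * e k n‖ ^ 2 = c * ∑ k ∈ T, ‖f k‖ ^ 2 := by
  have expand : ∀ n, conj (∑ k ∈ T, f k * e k n) * ∑ j ∈ T, f j * e j n =
      ∑ k ∈ T, ∑ j ∈ T, conj (f k) * f j * (conj (e k n) * e j n) := fun n => by
    rw [map_sum, Finset.sum_mul_sum]
    simp only [map_mul, mul_mul_mul_comm]
  apply Complex.ofReal_injective
  push_cast
  simp only [← Complex.conj_mul', expand]
  rw [Finset.sum_comm, Finset.mul_sum]
  refine Finset.sum_congr rfl fun k hk => ?_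
  rw [Finset.sum_comm]
  simp only [← Finset.mul_sum]
  rw [Finset.sum_congr rfl fun j hj => by rw [he k hk j hj]]
  simp [hk, mul_comm]

theorem div_ofReal (he : IsOrthogonalOn S T e c) (s : ℝ) :
    IsOrthogonalOn S T (fun k n => e k n / s) (c / s ^ 2) := by
  intro k hk j hj
  simp only [map_div₀, Complex.conj_ofReal, div_mul_div_comm, ← Finset.sum_div, he k hk j hj]
  split_ifs <;> push_cast <;> ring

theorem star (he : IsOrthogonalOn S T e c) :
    IsOrthogonalOn S T (fun k n => conj (e k n)) c := by
  intro k hk j hj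
  have h := congrArg conj (he k hk j hj)
  simp only [map_sum, map_mul] at h
  rw [h]
  split_ifs <;> simp

theorem pi {δ : Type*} [Fintype δ] [DecidableEq δ] {ι κ : δ → Type*} [∀ d, DecidableEq (κ d)]
    {S : ∀ d, Finset (ι d)} {T : ∀ d, Finset (κ d)}
    {e : ∀ d, κ d → ι d → ℂ} {c : δ → ℝ} (he : ∀ d, IsOrthogonalOn (S d) (T d) (e d) (c d)) :
    IsOrthogonalOn (Fintype.piFinset S) (Fintype.piFinset T)
      (fun k n => ∏ d, e d (k d) (n d)) (∏ d, c d) := by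
  intro k hk j hj
  simp only [map_prod, ← Finset.prod_mul_distrib]
  rw [← Finset.prod_univ_sum S (fun d m => conj (e d (k d) m) * e d (j d) m)]
  simp only [fun d => he d (k d) (Fintype.mem_piFinset.mp hk d) (j d)
    (Fintype.mem_piFinset.mp hj d), Fintype.prod_ite_zero, funext_iff]
  push_cast
  rfl

end IsOrthogonalOn

theorem sum_range_exp_int_mul {M : ℕ} (hM : M ≠ 0) (c : ℤ) :
    ∑ m ∈ Finset.range M, Complex.exp (2 * π * I * c * m / M) =
      if (M : ℤ) ∣ c then (M : ℂ) else 0 := by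
  have hζ := Complex.isPrimitiveRoot_exp M hM
  set z := Complex.exp (2 * π * I / M) ^ c
  have hpow : ∀ m : ℕ, Complex.exp (2 * π * I * c * m / M) = z ^ m := fun m => by
    rw [← zpow_natCast, ← zpow_mul, ← Complex.exp_int_mul]
    congr 1
    push_cast
    ring
  simp only [hpow]
  split_ifs with hc
  · simp [z, (hζ.zpow_eq_one_iff_dvd c).mpr hc]
  · have hz1 : z ≠ 1 := fun h => hc ((hζ.zpow_eq_one_iff_dvd c).mp h)
    have hzM : z ^ M = 1 := by
      rw [← zpow_natCast, ← zpow_mul, mul_comm c, zpow_mul, zpow_natCast, hζ.pow_eq_one, one_zpow]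
    rw [geom_sum_eq hz1, hzM, sub_self, zero_div]

noncomputable def expChar (M : ℕ) (α β : ℝ) (k n : ℕ) : ℂ :=
  Complex.exp (2 * π * I * ((k : ℂ) - α) * ((n : ℂ) - β) / M)

theorem expChar_comm (M : ℕ) (α β : ℝ) (k n : ℕ) : expChar M α β k n = expChar M β α n k := by
  simp only [expChar]; ring_nf

theorem conj_expChar_mul_expChar (M : ℕ) (α β : ℝ) (k j n : ℕ) :
    conj (expChar M α β k n) * expChar M α β j n =
      Complex.exp (2 * π * I * (((j : ℤ) - k : ℤ) : ℂ) * ((n : ℂ) - β) / M) := by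
  rw [expChar, expChar, ← Complex.exp_conj, ← Complex.exp_add]
  congr 1
  simp [map_div₀, map_ofNat]
  ring

theorem isOrthogonalOn_expChar {M : ℕ} (hM : M ≠ 0) (α β : ℝ) :
    IsOrthogonalOn (Finset.Icc 1 M) (Finset.Icc 1 M) (expChar M α β) M := by
  intro k hk j hj
  rw [Finset.mem_Icc] at hk hj
  simp only [conj_expChar_mul_expChar]
  split_ifs with hkj
  · simp [hkj]
  · set c : ℤ := j - k
    have hndvd : ¬ (M : ℤ) ∣ c := fun hdvd =>
      hkj (by have := Int.eq_zero_of_abs_lt_dvd hdvd (by rw [abs_lt]; omega); omega)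
    have hshift : ∀ m : ℕ, Complex.exp (2 * π * I * c * (((1 + m : ℕ) : ℂ) - β) / M) =
        Complex.exp (2 * π * I * c * (1 - β) / M) * Complex.exp (2 * π * I * c * m / M) :=
      fun m => by
      rw [← Complex.exp_add]; congr 1; push_cast; ring
    rw [← Finset.Ico_add_one_right_eq_Icc, Finset.sum_Ico_eq_sum_range, add_tsub_cancel_right]
    simp only [hshift, ← Finset.mul_sum, sum_range_exp_int_mul hM, if_neg hndvd, mul_zero]

theorem isOrthogonalOn_prod_expChar {δ : Type*} [Fintype δ] [DecidableEq δ] {N : δ → ℕ}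
    (hN : ∀ d, N d ≠ 0) {L : δ → ℝ} (hL : ∀ d, 0 < L d) (α β : δ → ℝ) :
    IsOrthogonalOn (Fintype.piFinset fun d => Finset.Icc 1 (N d))
      (Fintype.piFinset fun d => Finset.Icc 1 (N d))
      (fun k n => ∏ d, expChar (N d) (α d) (β d) (k d) (n d) / (√(L d) : ℂ))
      (∏ d, L d / N d)⁻¹ := by
  have h := IsOrthogonalOn.pi fun d => (isOrthogonalOn_expChar (hN d) (α d) (β d)).div_ofReal √(L d)
  simpa [Real.sq_sqrt (hL _).le] using h

theorem basisE_gridPt {N : Fin 3 → ℕ} (hN : ∀ d, N d ≠ 0) {a b : Fin 3 → ℝ}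
    (hab : ∀ d, a d ≠ b d) (k n : Fin 3 → ℕ) :
    basisE N a b k (gridPt N a b n) =
      ∏ d, expChar (N d) (1 + N d / 2) 1 (k d) (n d) / (√(b d - a d) : ℂ) := by
  refine Finset.prod_congr rfl fun d _ => ?_
  have hL : (b d : ℂ) - a d ≠ 0 := sub_ne_zero.mpr (by exact_mod_cast (hab d).symm)
  have hNd : (N d : ℂ) ≠ 0 := by exact_mod_cast hN d
  rw [gridPt, expChar]
  congr 2
  push_cast
  field_simp
  ring

theorem isOrthogonalOn_basisE_gridPt {N : Fin 3 → ℕ} (hN : ∀ d, N d ≠ 0) {a b : Fin 3 → ℝ}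
    (hab : ∀ d, a d < b d) :
    IsOrthogonalOn (Fintype.piFinset fun d => Finset.Icc 1 (N d))
      (Fintype.piFinset fun d => Finset.Icc 1 (N d))
      (fun k n => basisE N a b k (gridPt N a b n)) (∏ d, (b d - a d) / N d)⁻¹ := by
  simpa only [basisE_gridPt hN fun d => (hab d).ne] using
    isOrthogonalOn_prod_expChar hN (fun d => sub_pos.mpr (hab d)) _ _

-- Orthogonality in the mode index: `expChar` is symmetric in modes and grid points.
theorem isOrthogonalOn_conj_basisE_gridPt {N : Fin 3 → ℕ} (hN : ∀ d, N d ≠ 0)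
    {a b : Fin 3 → ℝ} (hab : ∀ d, a d < b d) :
    IsOrthogonalOn (Fintype.piFinset fun d => Finset.Icc 1 (N d))
      (Fintype.piFinset fun d => Finset.Icc 1 (N d))
      (fun n k => conj (basisE N a b k (gridPt N a b n))) (∏ d, (b d - a d) / N d)⁻¹ := by
  simpa only [basisE_gridPt hN fun d => (hab d).ne, expChar_comm] using
    (isOrthogonalOn_prod_expChar hN (fun d => sub_pos.mpr (hab d)) _ _).star

theorem norm_exp_mul_of_re_eq_zero {w : ℂ} (hw : w.re = 0) (z : ℂ) : ‖Complex.exp w * z‖ = ‖z‖ := by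
  rw [norm_mul, Complex.norm_exp, hw, Real.exp_zero, one_mul]

theorem re_lam (N : Fin 3 → ℕ) (a b : Fin 3 → ℝ) (k : Fin 3 → ℕ) (d : Fin 3) :
    (lam N a b k d).re = 0 := by
  have h : lam N a b k d = ((2 * π * ((k d : ℝ) - 1 - N d / 2) / (b d - a d) : ℝ) : ℂ) * I := by
    rw [lam]; push_cast; ring
  rw [h, Complex.mul_I_re, Complex.ofReal_im, neg_zero]

theorem strang_splitting_mass_conservation_general (N : Fin 3 → ℕ) (hN : ∀ d, 0 < N d ∧ Even (N d))
    (a b : Fin 3 → ℝ) (hab : ∀ d, a d < b d)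
    (τ : ℝ)
    (ψ φ χ ψ' : (Fin 3 → ℕ) → ℂ) (φhat χhat : (Fin 3 → ℕ) → ℂ)
    (hφ : ∀ n, φ n = Complex.exp (Complex.I * (τ : ℂ) / 4 * (1 - ((‖ψ n‖ : ℝ) : ℂ) ^ 2)) * ψ n)
    (hφhat : ∀ k, φhat k = ((∏ d : Fin 3, (b d - a d) / (N d : ℝ) : ℝ) : ℂ) *
      ∑ n ∈ Fintype.piFinset (fun d => Finset.Icc 1 (N d)),
        φ n * (starRingEnd ℂ) (basisE N a b k (gridPt N a b n)))
    (hχhat : ∀ k, χhat k =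
      Complex.exp (Complex.I * (τ : ℂ) / 2 * ∑ d : Fin 3, lam N a b k d ^ 2) * φhat k)
    (hχ : ∀ n, χ n = ∑ k ∈ Fintype.piFinset (fun d => Finset.Icc 1 (N d)),
      χhat k * basisE N a b k (gridPt N a b n))
    (hψ' : ∀ n, ψ' n =
      Complex.exp (Complex.I * (τ : ℂ) / 4 * (1 - ((‖χ n‖ : ℝ) : ℂ) ^ 2)) * χ n) :
    ((∏ d : Fin 3, (b d - a d) / (N d : ℝ)) *
        ∑ n ∈ Fintype.piFinset (fun d => Finset.Icc 1 (N d)), ‖ψ' n‖ ^ 2) =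
      (∏ d : Fin 3, (b d - a d) / (N d : ℝ)) *
        ∑ n ∈ Fintype.piFinset (fun d => Finset.Icc 1 (N d)), ‖ψ n‖ ^ 2 := by
  have hN0 : ∀ d, N d ≠ 0 := fun d => (hN d).1.ne'
  set G := Fintype.piFinset fun d => Finset.Icc 1 (N d)
  set h := ∏ d : Fin 3, (b d - a d) / (N d : ℝ)
  have hh : h ≠ 0 := Finset.prod_ne_zero_iff.mpr fun d _ =>
    div_ne_zero (sub_pos.mpr (hab d)).ne' (Nat.cast_ne_zero.mpr (hN0 d))
  have norm_φ (n) : ‖φ n‖ = ‖ψ n‖ := by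
    rw [hφ]; exact norm_exp_mul_of_re_eq_zero (by simp [pow_two]) _
  have norm_ψ' (n) : ‖ψ' n‖ = ‖χ n‖ := by
    rw [hψ']; exact norm_exp_mul_of_re_eq_zero (by simp [pow_two]) _
  have norm_χhat (k) : ‖χhat k‖ = ‖φhat k‖ := by
    rw [hχhat]
    exact norm_exp_mul_of_re_eq_zero (by simp [Complex.re_sum, Complex.im_sum, pow_two, re_lam]) _
  have mass_χ : ∑ n ∈ G, ‖χ n‖ ^ 2 = h⁻¹ * ∑ k ∈ G, ‖χhat k‖ ^ 2 := by
    simp only [hχ]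
    exact (isOrthogonalOn_basisE_gridPt hN0 hab).sum_norm_sq_sum_mul χhat
  have mass_φhat : ∑ k ∈ G, ‖φhat k‖ ^ 2 = h ^ 2 * (h⁻¹ * ∑ n ∈ G, ‖φ n‖ ^ 2) := by
    simp only [hφhat, norm_mul, Complex.norm_real, Real.norm_eq_abs, mul_pow, sq_abs,
      ← Finset.mul_sum]
    rw [(isOrthogonalOn_conj_basisE_gridPt hN0 hab).sum_norm_sq_sum_mul φ]
  calc h * ∑ n ∈ G, ‖ψ' n‖ ^ 2 = h * ∑ n ∈ G, ‖χ n‖ ^ 2 := by simp only [norm_ψ']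
    _ = h * (h⁻¹ * ∑ k ∈ G, ‖φhat k‖ ^ 2) := by rw [mass_χ]; simp only [norm_χhat]
    _ = h * ∑ n ∈ G, ‖φ n‖ ^ 2 := by rw [mass_φhat]; field_simp
    _ = h * ∑ n ∈ G, ‖ψ n‖ ^ 2 := by simp only [norm_φ]

/-- one step of the Strang splitting scheme for the Gross–Pitaevskii equation
preserves the discrete finite mass `h₁h₂h₃ ∑_{x_n∈X_N} |ψ_n|²`. The step consists of a half
potential step `φ_n = e^{(iτ/4)(1−|ψ_n|²)} ψ_n`, a full kinetic step carried out in Fourier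
space, `χ̂ₖ = e^{(iτ/2)(Λ_{k,1}²+Λ_{k,2}²+Λ_{k,3}²)} φ̂ₖ` with
`φ̂ₖ = h₁h₂h₃ ∑_n φ_n conj(𝓔ₖ(x_n))` and `χ_n = ∑_{k∈I_N} χ̂ₖ 𝓔ₖ(x_n)`, followed by a final
half potential step `ψ'_n = e^{(iτ/4)(1−|χ_n|²)} χ_n`. -/
theorem strang_splitting_mass_conservation (N : Fin 3 → ℕ) (hN : ∀ d, 0 < N d ∧ Even (N d))
    (a b : Fin 3 → ℝ) (hab : ∀ d, a d < b d)
    (τ : ℝ) (hτ : 0 < τ)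
    (ψ φ χ ψ' : (Fin 3 → ℕ) → ℂ) (φhat χhat : (Fin 3 → ℕ) → ℂ)
    (hφ : ∀ n, φ n = Complex.exp (Complex.I * (τ : ℂ) / 4 * (1 - ((‖ψ n‖ : ℝ) : ℂ) ^ 2)) * ψ n)
    (hφhat : ∀ k, φhat k = ((∏ d : Fin 3, (b d - a d) / (N d : ℝ) : ℝ) : ℂ) *
      ∑ n ∈ Fintype.piFinset (fun d => Finset.Icc 1 (N d)),
        φ n * (starRingEnd ℂ) (basisE N a b k (gridPt N a b n)))
    (hχhat : ∀ k, χhat k =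
      Complex.exp (Complex.I * (τ : ℂ) / 2 * ∑ d : Fin 3, lam N a b k d ^ 2) * φhat k)
    (hχ : ∀ n, χ n = ∑ k ∈ Fintype.piFinset (fun d => Finset.Icc 1 (N d)),
      χhat k * basisE N a b k (gridPt N a b n))
    (hψ' : ∀ n, ψ' n =
      Complex.exp (Complex.I * (τ : ℂ) / 4 * (1 - ((‖χ n‖ : ℝ) : ℂ) ^ 2)) * χ n) :
    ((∏ d : Fin 3, (b d - a d) / (N d : ℝ)) *
        ∑ n ∈ Fintype.piFinset (fun d => Finset.Icc 1 (N d)), ‖ψ' n‖ ^ 2) =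
      (∏ d : Fin 3, (b d - a d) / (N d : ℝ)) *
        ∑ n ∈ Fintype.piFinset (fun d => Finset.Icc 1 (N d)), ‖ψ n‖ ^ 2 :=
  strang_splitting_mass_conservation_general N hN a b hab τ ψ φ χ ψ' φhat χhat hφ hφhat hχhat hχ hψ'
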